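/- For n ≥ 1 define D_n = lcm{ k · j_1!···j_k! : k ∈ {1,...,n}, j_i ≥ 1, j_1+...+j_k = n } and d_n = ∏_{p prime, p < n} p^{max{t : p^t ≤ s_p(n)}}, where s_p(n) is the base-p digit sum of n. Then D_n = n! · d_n. -/

import Mathlib

/-- base-p digit sum -/
def sp (p n : ℕ) : ℕ := (Nat.digits p n).sum

/-- `D n` : the lcm of `k * j₁! ⋯ jₖ!` over all compositions of `n` into `k ≥ 1` positive parts. -/
def Dn (n : ℕ) : ℕ :=
  (Finset.Icc 1 n).lcm fun k =>
    (((Finset.Nat.antidiagonalTuple k n).filter fun j => ∀ i, 1 ≤ j i).lcm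
      fun j => k * ∏ i, Nat.factorial (j i))

/-- `d n = ∏_{p prime, p < n} p ^ (max { t : p ^ t ≤ sₚ(n)})`. -/
def dn (n : ℕ) : ℕ :=
  ∏ p ∈ (Finset.range n).filter Nat.Prime, p ^ Nat.log p (sp p n)

/-!
Fix a prime `p` and write `s = sp p n`, `L = log_p s`. Legendre's formula
`(p - 1) v_p(m!) = m - s_p(m)` gives, for a composition `j` of `n` into `k` parts with
`S = ∑ s_p(j_i)`, the identity `S = s + (p - 1) (v_p(n!) - ∑ v_p(j_i!))`. Since every part
has digit sum at least one, `p ^ v_p(k) ≤ k ≤ S`, and Bernoulli's inequality turns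
`S = s + (p - 1) c` into `log_p S ≤ L + c`; hence `v_p(k ∏ j_i!) ≤ v_p(n!) + L`.
Conversely, `n` splits into `p ^ L ≤ s` parts without carries (`S = s`), and that composition
attains `v_p(n!) + L`.
-/

open Nat

section DigitSum

variable {p : ℕ}

lemma sp_zero : sp p 0 = 0 := by simp [sp]

lemma sp_add_base_mul (hp : 1 < p) {r : ℕ} (hr : r < p) (q : ℕ) :
    sp p (r + p * q) = r + sp p q := by
  by_cases h : r ≠ 0 ∨ q ≠ 0
  · rw [sp, Nat.digits_add p hp r q hr h, List.sum_cons, sp]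
  · obtain ⟨rfl, rfl⟩ : r = 0 ∧ q = 0 := by tauto
    simp [sp_zero]

lemma sp_of_lt (hp : 1 < p) {r : ℕ} (hr : r < p) : sp p r = r := by
  simpa [sp_zero] using sp_add_base_mul hp hr 0

lemma sp_base_mul (hp : 1 < p) (q : ℕ) : sp p (p * q) = sp p q := by
  simpa using sp_add_base_mul hp (by omega : 0 < p) q

lemma sp_pos {m : ℕ} (hm : m ≠ 0) : 0 < sp p m :=
  List.sum_pos_iff_exists_pos_nat.mpr
    ⟨_, List.getLast_mem _, Nat.pos_of_ne_zero (Nat.getLast_digit_ne_zero p hm)⟩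

lemma sp_lt_of_le (hp : 1 < p) {n : ℕ} (hn : n ≤ p) : sp p n < p := by
  rcases hn.lt_or_eq with hn | rfl
  · rwa [sp_of_lt hp hn]
  · have h := sp_base_mul hp 1
    rw [mul_one, sp_of_lt hp hp] at h
    omega

lemma sub_one_mul_factorization_factorial_add_sp (hp : p.Prime) (m : ℕ) :
    (p - 1) * (m)!.factorization p + sp p m = m := by
  rw [sub_one_mul_factorization_factorial hp]
  exact Nat.sub_add_cancel (Nat.digit_sum_le p m)

lemma sub_one_mul_sum_factorization_factorial_add_sum_sp (hp : p.Prime) {ι : Type*}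
    (s : Finset ι) (j : ι → ℕ) :
    (p - 1) * ∑ i ∈ s, (j i)!.factorization p + ∑ i ∈ s, sp p (j i) = ∑ i ∈ s, j i := by
  rw [Finset.mul_sum, ← Finset.sum_add_distrib]
  exact Finset.sum_congr rfl fun i _ => sub_one_mul_factorization_factorial_add_sp hp (j i)

/-- Splitting off a unit digit, or dividing out a factor `p`, never creates a carry. -/
lemma exists_composition_sum_sp_eq (hp : 1 < p) (n : ℕ) :
    ∀ k, 1 ≤ k → k ≤ sp p n →
      ∃ j : Fin k → ℕ, (∀ i, 1 ≤ j i) ∧ ∑ i, j i = n ∧ ∑ i, sp p (j i) = sp p n := by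
  induction n using Nat.strong_induction_on with
  | _ n ih =>
  intro k hk hks
  have hn : n ≠ 0 := by rintro rfl; simp [sp_zero] at hks; omega
  have hmod : n % p < p := Nat.mod_lt n (by omega)
  have hdecomp := sp_add_base_mul hp hmod (n / p)
  rw [Nat.mod_add_div] at hdecomp
  obtain rfl | hk := hk.eq_or_lt
  · exact ⟨fun _ => n, fun _ => Nat.one_le_iff_ne_zero.mpr hn, by simp, by simp⟩
  rcases eq_or_ne (n % p) 0 with hr | hr
  · obtain ⟨j, hj_pos, hj_sum, hj_sp⟩ :=
      ih (n / p) (Nat.div_lt_self (by omega) hp) k (by omega) (by omega)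
    refine ⟨fun i => p * j i, fun i => by nlinarith [hj_pos i], ?_, ?_⟩
    · rw [← Finset.mul_sum, hj_sum, Nat.mul_div_cancel' (Nat.dvd_of_mod_eq_zero hr)]
    · simp only [sp_base_mul hp, hj_sp]
      omega
  · obtain ⟨k, rfl⟩ : ∃ k', k = k' + 1 := ⟨k - 1, by omega⟩
    have hpred := sp_add_base_mul hp (by omega : n % p - 1 < p) (n / p)
    rw [← Nat.sub_add_comm (Nat.one_le_iff_ne_zero.mpr hr), Nat.mod_add_div] at hpred
    obtain ⟨j, hj_pos, hj_sum, hj_sp⟩ := ih (n - 1) (by omega) k (by omega) (by omega)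
    refine ⟨Fin.cons 1 j, Fin.cons le_rfl hj_pos, ?_, ?_⟩
    · rw [Fin.sum_univ_succ]
      simp only [Fin.cons_zero, Fin.cons_succ]
      omega
    · rw [Fin.sum_univ_succ]
      simp only [Fin.cons_zero, Fin.cons_succ, sp_of_lt hp hp]
      omega

end DigitSum

lemma log_le_log_add_of_eq_add_mul {p s c S : ℕ} (hp : 1 < p) (hS : S = s + (p - 1) * c) :
    Nat.log p S ≤ Nat.log p s + c := by
  rcases eq_or_ne S 0 with hS0 | hS0
  · simp [hS0]
  refine Nat.lt_succ_iff.mp (Nat.log_lt_of_lt_pow hS0 ?_)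
  have hs : s < p ^ (Nat.log p s + 1) := Nat.lt_pow_succ_log_self hp s
  have hpow : 1 ≤ p ^ (Nat.log p s + 1) := Nat.one_le_pow _ _ (by omega)
  have hbernoulli : 1 + c * (p - 1) ≤ p ^ c := by
    simpa [Nat.add_sub_cancel' hp.le] using
      one_add_le_pow_of_two_add_nonneg (a := p - 1) (by positivity) c
  calc S < p ^ (Nat.log p s + 1) * (1 + c * (p - 1)) := by
        rw [hS]; nlinarith [Nat.mul_le_mul_right (c * (p - 1)) hpow]
    _ ≤ p ^ (Nat.log p s + 1) * p ^ c := Nat.mul_le_mul_left _ hbernoulli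
    _ = p ^ (Nat.log p s + c).succ := by rw [← pow_add]; congr 1; omega

lemma dn_ne_zero (n : ℕ) : dn n ≠ 0 :=
  Finset.prod_ne_zero_iff.mpr fun _ hq => pow_ne_zero _ (Finset.mem_filter.mp hq).2.ne_zero

lemma factorization_dn (n : ℕ) {p : ℕ} (hp : p.Prime) :
    (dn n).factorization p = Nat.log p (sp p n) := by
  rw [dn, Nat.factorization_prod fun q hq => pow_ne_zero _ (Finset.mem_filter.mp hq).2.ne_zero,
    Finset.sum_apply']
  rw [Finset.sum_congr rfl fun q hq => by
    rw [Nat.factorization_pow, (Finset.mem_filter.mp hq).2.factorization]]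
  simp only [Finsupp.smul_apply, Finsupp.single_apply, smul_eq_mul, mul_ite, mul_one, mul_zero,
    Finset.sum_ite_eq', Finset.mem_filter, Finset.mem_range, hp, and_true]
  split_ifs with hpn
  · rfl
  · exact (Nat.log_eq_zero_iff.mpr (Or.inl (sp_lt_of_le hp.one_lt (by omega)))).symm

lemma factorization_factorial_mul_dn (n : ℕ) {p : ℕ} (hp : p.Prime) :
    (n ! * dn n).factorization p = (n)!.factorization p + Nat.log p (sp p n) := by
  rw [Nat.factorization_mul (factorial_ne_zero n) (dn_ne_zero n), Finsupp.add_apply,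
    factorization_dn n hp]

lemma Dn_dvd {n N : ℕ} (h : ∀ k, 1 ≤ k → k ≤ n → ∀ j : Fin k → ℕ, ∑ i, j i = n →
      (∀ i, 1 ≤ j i) → k * ∏ i, (j i)! ∣ N) : Dn n ∣ N :=
  Finset.lcm_dvd fun k hk => Finset.lcm_dvd fun j hj => by
    rw [Finset.mem_Icc] at hk
    rw [Finset.mem_filter, Finset.Nat.mem_antidiagonalTuple] at hj
    exact h k hk.1 hk.2 j hj.1 hj.2

lemma dvd_Dn {n k : ℕ} (hk : 1 ≤ k) (hkn : k ≤ n) {j : Fin k → ℕ} (hj_sum : ∑ i, j i = n)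
    (hj_pos : ∀ i, 1 ≤ j i) : k * ∏ i, (j i)! ∣ Dn n := by
  refine dvd_trans ?_ (Finset.dvd_lcm (Finset.mem_Icc.mpr ⟨hk, hkn⟩))
  exact Finset.dvd_lcm
    (Finset.mem_filter.mpr ⟨Finset.Nat.mem_antidiagonalTuple.mpr hj_sum, hj_pos⟩)

lemma mul_prod_factorial_ne_zero {k : ℕ} (hk : k ≠ 0) (j : Fin k → ℕ) :
    k * ∏ i, (j i)! ≠ 0 :=
  mul_ne_zero hk (Finset.prod_ne_zero_iff.mpr fun _ _ => factorial_ne_zero _)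

lemma Dn_ne_zero (n : ℕ) : Dn n ≠ 0 := by
  simp only [Dn, ne_eq, Finset.lcm_eq_zero_iff, Finset.mem_Icc, Finset.mem_filter, not_exists,
    not_and]
  exact fun k hk j _ => mul_prod_factorial_ne_zero (by omega) j

lemma factorization_mul_prod_factorial {k : ℕ} (hk : k ≠ 0) (j : Fin k → ℕ) (p : ℕ) :
    (k * ∏ i, (j i)!).factorization p = k.factorization p + ∑ i, (j i)!.factorization p := by
  rw [Nat.factorization_mul hk (Finset.prod_ne_zero_iff.mpr fun _ _ => factorial_ne_zero _),
    Finsupp.add_apply, Nat.factorization_prod fun _ _ => factorial_ne_zero _, Finset.sum_apply']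

lemma factorization_mul_prod_factorial_le {n k p : ℕ} (hp : p.Prime) (hk : k ≠ 0)
    {j : Fin k → ℕ} (hj_sum : ∑ i, j i = n) (hj_pos : ∀ i, 1 ≤ j i) :
    (k * ∏ i, (j i)!).factorization p ≤ (n ! * dn n).factorization p := by
  rw [factorization_mul_prod_factorial hk, factorization_factorial_mul_dn n hp]
  set V := ∑ i, (j i)!.factorization p
  set S := ∑ i, sp p (j i)
  have hV : (p - 1) * V + S = n :=
    hj_sum ▸ sub_one_mul_sum_factorization_factorial_add_sum_sp hp _ j
  have hW := sub_one_mul_factorization_factorial_add_sp hp n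
  have hVW : V ≤ (n)!.factorization p := by
    have := (Nat.factorization_le_iff_dvd
      (Finset.prod_ne_zero_iff.mpr fun _ _ => factorial_ne_zero _) (factorial_ne_zero n)).mpr
      (hj_sum ▸ Nat.prod_factorial_dvd_factorial_sum Finset.univ j) p
    rwa [Nat.factorization_prod fun _ _ => factorial_ne_zero _, Finset.sum_apply'] at this
  obtain ⟨c, hc⟩ := Nat.exists_eq_add_of_le hVW
  have hS : S = sp p n + (p - 1) * c := by
    rw [hc, mul_add] at hW
    omega
  have hkS : k ≤ S :=
    calc k = ∑ _i : Fin k, 1 := by simp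
      _ ≤ S := Finset.sum_le_sum fun i _ => sp_pos (Nat.one_le_iff_ne_zero.mp (hj_pos i))
  have hk_log : k.factorization p ≤ Nat.log p S :=
    Nat.le_log_of_pow_le hp.one_lt ((Nat.le_of_dvd (by omega) (Nat.ordProj_dvd k p)).trans hkS)
  have := log_le_log_add_of_eq_add_mul hp.one_lt hS
  omega

lemma factorization_factorial_mul_dn_le_Dn {n p : ℕ} (hn : n ≠ 0) (hp : p.Prime) :
    (n ! * dn n).factorization p ≤ (Dn n).factorization p := by
  set L := Nat.log p (sp p n)
  have hk : 1 ≤ p ^ L := Nat.one_le_pow _ _ hp.pos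
  have hLs : p ^ L ≤ sp p n := Nat.pow_log_le_self p (sp_pos hn).ne'
  obtain ⟨j, hj_pos, hj_sum, hj_sp⟩ := exists_composition_sum_sp_eq hp.one_lt n (p ^ L) hk hLs
  have hdvd := dvd_Dn hk (hLs.trans (Nat.digit_sum_le p n)) hj_sum hj_pos
  refine le_trans ?_ ((Nat.factorization_le_iff_dvd
    (mul_prod_factorial_ne_zero (by omega) j) (Dn_ne_zero n)).mpr hdvd p)
  rw [factorization_mul_prod_factorial (by omega), factorization_factorial_mul_dn n hp,
    Nat.factorization_pow_self hp]
  have hV := sub_one_mul_sum_factorization_factorial_add_sum_sp hp Finset.univ j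
  have hW := sub_one_mul_factorization_factorial_add_sp hp n
  rw [hj_sum, hj_sp] at hV
  have hVW : (p - 1) * ∑ i, (j i)!.factorization p = (p - 1) * (n)!.factorization p := by
    omega
  have := Nat.eq_of_mul_eq_mul_left (by have := hp.two_le; omega) hVW
  omega

lemma mul_prod_factorial_dvd_factorial_mul_dn {n k : ℕ} (hk : k ≠ 0) {j : Fin k → ℕ}
    (hj_sum : ∑ i, j i = n) (hj_pos : ∀ i, 1 ≤ j i) : k * ∏ i, (j i)! ∣ n ! * dn n :=
  (Nat.factorization_prime_le_iff_dvd (mul_prod_factorial_ne_zero hk j)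
    (mul_ne_zero (factorial_ne_zero n) (dn_ne_zero n))).mp
    fun _ hp => factorization_mul_prod_factorial_le hp hk hj_sum hj_pos

lemma factorial_mul_dn_dvd_Dn {n : ℕ} (hn : n ≠ 0) : n ! * dn n ∣ Dn n :=
  (Nat.factorization_prime_le_iff_dvd (mul_ne_zero (factorial_ne_zero n) (dn_ne_zero n))
    (Dn_ne_zero n)).mp fun _ hp => factorization_factorial_mul_dn_le_Dn hn hp

theorem Dn_eq_factorial_mul_dn (n : ℕ) (hn : 1 ≤ n) :
    Dn n = n.factorial * dn n :=
  Nat.dvd_antisymm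
    (Dn_dvd fun _ hk _ _ hj_sum hj_pos =>
      mul_prod_factorial_dvd_factorial_mul_dn (by omega) hj_sum hj_pos)
    (factorial_mul_dn_dvd_Dn (by omega))
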